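/- arXiv:2504.14124 — 6 statements merged into one kernel-verified Lean document; each statement's English description precedes it below -/
import Mathlib

section
/- A graph G admits a self-identifying code if and only if G has no semi-closed-twins, i.e., no two distinct vertices u, v with N[u] ⊆ N[v] or N[v] ⊆ N[u]. -/
def closedNbhd {V : Type*} (G : SimpleGraph V) (v : V) : Set V :=
  insert v (G.neighborSet v)

def IsSIC {V : Type*} (G : SimpleGraph V) (S : Set V) : Prop :=
  ∀ x : V, (closedNbhd G x ∩ S).Nonempty ∧
    (⋂ v ∈ closedNbhd G x ∩ S, closedNbhd G v) = {x}

lemma mem_closedNbhd_comm {V : Type*} (G : SimpleGraph V) {u v : V} :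
    u ∈ closedNbhd G v ↔ v ∈ closedNbhd G u := by
  simp only [closedNbhd, Set.mem_insert_iff, SimpleGraph.mem_neighborSet]
  constructor <;> rintro (h | h)
  · exact Or.inl h.symm
  · exact Or.inr h.symm
  · exact Or.inl h.symm
  · exact Or.inr h.symm

lemma self_mem_closedNbhd {V : Type*} (G : SimpleGraph V) (v : V) :
    v ∈ closedNbhd G v := Set.mem_insert _ _

theorem stmt_1 {V : Type*} [Fintype V] (G : SimpleGraph V) :
    (∃ S : Set V, IsSIC G S) ↔
      ¬ ∃ u v : V, u ≠ v ∧
        (closedNbhd G u ⊆ closedNbhd G v ∨ closedNbhd G v ⊆ closedNbhd G u) := by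
  constructor
  · rintro ⟨S, hS⟩ ⟨u, v, huv, h⟩
    -- WLOG reduce: from subset N[a] ⊆ N[b], a ≠ b derive contradiction
    have key : ∀ a b : V, a ≠ b → closedNbhd G a ⊆ closedNbhd G b → False := by
      intro a b hab hsub
      obtain ⟨hne, hint⟩ := hS a
      have hb : b ∈ ⋂ w ∈ closedNbhd G a ∩ S, closedNbhd G w := by
        rw [Set.mem_iInter₂]
        intro w hw
        have : w ∈ closedNbhd G b := hsub hw.1
        exact (mem_closedNbhd_comm G).mp this
      rw [hint] at hb
      exact hab hb.symm
    rcases h with h | h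
    · exact key u v huv h
    · exact key v u huv.symm h
  · intro hno
    refine ⟨Set.univ, fun x => ?_⟩
    constructor
    · exact ⟨x, self_mem_closedNbhd G x, Set.mem_univ x⟩
    · ext y
      simp only [Set.mem_iInter, Set.mem_singleton_iff]
      constructor
      · intro hy
        by_contra hxy
        apply hno
        refine ⟨x, y, fun h => hxy h.symm, Or.inl ?_⟩
        intro w hw
        have : y ∈ closedNbhd G w := hy w ⟨hw, Set.mem_univ w⟩
        exact (mem_closedNbhd_comm G).mp this
      · rintro rfl w hw
        exact (mem_closedNbhd_comm G).mp hw.1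
end

section
/- Every simple graph on at most 3 vertices contains a pair of semi-closed-twins; hence no graph on at most 3 vertices admits a self-identifying code. In particular, the 4-cycle C₄ is semi-closed-twin-free and is a smallest graph admitting a self-identifying code. -/
/-- `u` and `v` are semi-closed-twins. -/
def SemiClosedTwins {V : Type*} (G : SimpleGraph V) (u v : V) : Prop :=
  u ≠ v ∧ (closedNbhd G u ⊆ closedNbhd G v ∨ closedNbhd G v ⊆ closedNbhd G u)

lemma adj_mem_closedNbhd {V : Type*} {G : SimpleGraph V} {u v : V} (h : G.Adj u v) :
    v ∈ closedNbhd G u := Set.mem_insert_of_mem _ h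

lemma no_sic_of_subset {V : Type*} (G : SimpleGraph V) {u v : V} (hne : u ≠ v)
    (h : closedNbhd G u ⊆ closedNbhd G v) : ¬ ∃ S : Set V, IsSIC G S := by
  rintro ⟨S, hS⟩
  obtain ⟨-, hinter⟩ := hS u
  have hv : v ∈ ⋂ w ∈ closedNbhd G u ∩ S, closedNbhd G w := by
    rw [Set.mem_iInter₂]
    intro w hw
    exact (mem_closedNbhd_comm G).mp (h hw.1)
  rw [hinter] at hv
  exact hne hv.symm

lemma no_sic_of_twins {V : Type*} (G : SimpleGraph V) {u v : V}
    (h : SemiClosedTwins G u v) : ¬ ∃ S : Set V, IsSIC G S := by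
  obtain ⟨hne, h1 | h1⟩ := h
  · exact no_sic_of_subset G hne h1
  · exact no_sic_of_subset G hne.symm h1

lemma exists_adj_of_connected {V : Type*} (G : SimpleGraph V) (h : G.Connected)
    (c x : V) (hne : x ≠ c) : ∃ w, G.Adj c w := by
  obtain ⟨p⟩ := h.preconnected c x
  cases p with
  | nil => exact absurd rfl hne.symm
  | cons h' _ => exact ⟨_, h'⟩

lemma twins_of_center {V : Type*} (G : SimpleGraph V) {p q r : V}
    (hpq : G.Adj p q) (hpr : G.Adj p r)
    (cov : ∀ x : V, x = p ∨ x = q ∨ x = r) :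
    SemiClosedTwins G q p := by
  refine ⟨hpq.ne', Or.inl fun x _ => ?_⟩
  rcases cov x with rfl | rfl | rfl
  · exact self_mem_closedNbhd G x
  · exact adj_mem_closedNbhd hpq
  · exact adj_mem_closedNbhd hpr

lemma twins_of_small {V : Type} [Fintype V] (G : SimpleGraph V) (hc : G.Connected)
    (h2 : 2 ≤ Fintype.card V) (h3 : Fintype.card V ≤ 3) :
    ∃ u v : V, SemiClosedTwins G u v := by
  classical
  interval_cases h : Fintype.card V
  · -- card = 2
    rw [show Fintype.card V = Finset.univ.card from rfl, Finset.card_eq_two] at h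
    obtain ⟨a, b, hab, huniv⟩ := h
    have cov : ∀ w : V, w = a ∨ w = b := fun w => by
      have := Finset.mem_univ w; rw [huniv] at this; simpa using this
    obtain ⟨w, hw⟩ := exists_adj_of_connected G hc a b (Ne.symm hab)
    have hadj : G.Adj a b := by
      rcases cov w with rfl | rfl
      · exact absurd hw (G.irrefl)
      · exact hw
    refine ⟨a, b, hab, Or.inl fun x _ => ?_⟩
    rcases cov x with rfl | rfl
    · exact adj_mem_closedNbhd hadj.symm
    · exact self_mem_closedNbhd G x
  · -- card = 3
    rw [show Fintype.card V = Finset.univ.card from rfl, Finset.card_eq_three] at h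
    obtain ⟨a, b, c, hab, hac, hbc, huniv⟩ := h
    have cov : ∀ w : V, w = a ∨ w = b ∨ w = c := fun w => by
      have := Finset.mem_univ w; rw [huniv] at this; simpa using this
    by_cases h1 : G.Adj a b <;> by_cases h2' : G.Adj a c <;> by_cases h3' : G.Adj b c
    · exact ⟨_, _, twins_of_center G h1 h2' cov⟩
    · exact ⟨_, _, twins_of_center G h1 h2' cov⟩
    · exact ⟨_, _, twins_of_center G h1.symm h3' fun x => by rcases cov x with rfl|rfl|rfl <;> tauto⟩
    · -- only edge ab : c has a neighbor, contradiction
      obtain ⟨w, hw⟩ := exists_adj_of_connected G hc c a hac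
      rcases cov w with rfl | rfl | rfl
      · exact absurd hw.symm h2'
      · exact absurd hw.symm h3'
      · exact absurd hw (G.irrefl)
    · exact ⟨_, _, twins_of_center G h2'.symm h3'.symm fun x => by rcases cov x with rfl|rfl|rfl <;> tauto⟩
    · -- only edge ac : b has a neighbor, contradiction
      obtain ⟨w, hw⟩ := exists_adj_of_connected G hc b a hab
      rcases cov w with rfl | rfl | rfl
      · exact absurd hw.symm h1
      · exact absurd hw (G.irrefl)
      · exact absurd hw h3'
    · -- only edge bc : a has a neighbor, contradiction
      obtain ⟨w, hw⟩ := exists_adj_of_connected G hc a b (Ne.symm hab)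
      rcases cov w with rfl | rfl | rfl
      · exact absurd hw (G.irrefl)
      · exact absurd hw h1
      · exact absurd hw h2'
    · -- no edges : a has a neighbor, contradiction
      obtain ⟨w, hw⟩ := exists_adj_of_connected G hc a b (Ne.symm hab)
      rcases cov w with rfl | rfl | rfl
      · exact absurd hw (G.irrefl)
      · exact absurd hw h1
      · exact absurd hw h2'

lemma c4_twin_free : ¬ ∃ u v : Fin 4, SemiClosedTwins (SimpleGraph.cycleGraph 4) u v := by
  simp only [SemiClosedTwins, closedNbhd, Set.subset_def, Set.mem_insert_iff,
    SimpleGraph.mem_neighborSet, SimpleGraph.cycleGraph_adj]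
  decide

lemma c4_sic : ∃ S : Set (Fin 4), IsSIC (SimpleGraph.cycleGraph 4) S := by
  refine ⟨Set.univ, fun x => ⟨⟨x, self_mem_closedNbhd _ x, Set.mem_univ x⟩, ?_⟩⟩
  ext y
  simp only [Set.mem_iInter, Set.mem_inter_iff, Set.mem_univ, and_true,
    Set.mem_singleton_iff, closedNbhd, Set.mem_insert_iff,
    SimpleGraph.mem_neighborSet, SimpleGraph.cycleGraph_adj]
  revert x y
  decide

theorem stmt_4 :
    -- every (connected) graph on 2 ≤ n ≤ 3 vertices has a pair of semi-closed-twins …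
    (∀ (V : Type) [Fintype V] (G : SimpleGraph V), G.Connected →
      2 ≤ Fintype.card V → Fintype.card V ≤ 3 → ∃ u v : V, SemiClosedTwins G u v) ∧
    -- … hence no such graph admits a self-identifying code
    (∀ (V : Type) [Fintype V] (G : SimpleGraph V), G.Connected →
      2 ≤ Fintype.card V → Fintype.card V ≤ 3 → ¬ ∃ S : Set V, IsSIC G S) ∧
    -- C₄ is semi-closed-twin-free and admits a self-identifying code,
    (¬ ∃ u v : Fin 4, SemiClosedTwins (SimpleGraph.cycleGraph 4) u v) ∧
    (∃ S : Set (Fin 4), IsSIC (SimpleGraph.cycleGraph 4) S) ∧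
    -- and it is a smallest such graph: every connected graph (on ≥ 2 vertices)
    -- admitting a self-identifying code has at least 4 vertices
    (∀ (V : Type) [Fintype V] (G : SimpleGraph V), G.Connected →
      2 ≤ Fintype.card V → (∃ S : Set V, IsSIC G S) → 4 ≤ Fintype.card V) := by
  refine ⟨fun V _ G => twins_of_small G, ?_, c4_twin_free, c4_sic, ?_⟩
  · intro V _ G hc h2 h3
    obtain ⟨u, v, htw⟩ := twins_of_small G hc h2 h3
    exact no_sic_of_twins G htw
  · intro V _ G hc h2 hsic
    by_contra h4
    push_neg at h4
    obtain ⟨u, v, htw⟩ := twins_of_small G hc h2 (Nat.lt_succ_iff.mp h4)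
    exact no_sic_of_twins G htw hsic
end

section
/- Let G be a graph with minimum degree δ(G) ≥ 1 and let S ⊆ V(G) be such that every vertex is dominated by S (|N_S[v]| ≥ 1 for all v) and every pair of distinct vertices u, v satisfies min(|N_S[u] − N_S[v]|, |N_S[v] − N_S[u]|) ≥ 1. Then S is 2-dominating: |N_S[v]| ≥ 2 for every vertex v. -/
/-! If `N_S[v]` had at most one element, it would lie inside `{w}` for some `w ∈ N[v]`. Some
`u ≠ v` has `w ∈ N[u]` (a neighbour of `v` if `w = v`, otherwise `w` itself), so
`N_S[v] ⊆ N_S[u]` and `N_S[v] - N_S[u]` is empty, against the separation hypothesis. -/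

theorem Set.exists_mem_subset_singleton_of_ncard_le_one {α : Type*} [Finite α] {A B : Set α}
    (hA : A.Nonempty) (hBA : B ⊆ A) (hB : B.ncard ≤ 1) : ∃ w ∈ A, B ⊆ {w} := by
  rcases B.eq_empty_or_nonempty with rfl | ⟨b, hb⟩
  · obtain ⟨a, ha⟩ := hA
    exact ⟨a, ha, empty_subset _⟩
  · exact ⟨b, hBA hb, fun x hx => (ncard_le_one B.toFinite).1 hB x hx b hb⟩

theorem SimpleGraph.exists_ne_mem_closedNbhd {V : Type*} (G : SimpleGraph V) {v w : V}
    [Fintype (G.neighborSet v)] (hv : 0 < G.degree v) (hw : w ∈ closedNbhd G v) :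
    ∃ u ≠ v, w ∈ closedNbhd G u := by
  rcases hw with rfl | hvw
  · obtain ⟨u, hwu⟩ := G.degree_pos_iff_exists_adj w |>.1 hv
    exact ⟨u, hwu.ne.symm, Or.inr hwu.symm⟩
  · exact ⟨w, (G.ne_of_adj hvw).symm, Set.mem_insert w _⟩

theorem stmt_5_general {V : Type*} [Fintype V] (G : SimpleGraph V) [DecidableRel G.Adj]
    (S : Set V)
    (hdeg : ∀ v : V, 1 ≤ G.degree v)
    (hdist : ∀ u v : V, u ≠ v →
      1 ≤ min ((closedNbhd G u ∩ S) \ (closedNbhd G v ∩ S)).ncard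
            ((closedNbhd G v ∩ S) \ (closedNbhd G u ∩ S)).ncard) :
    ∀ v : V, 2 ≤ (closedNbhd G v ∩ S).ncard := by
  intro v
  by_contra! hlt
  obtain ⟨w, hwv, hsub⟩ := Set.exists_mem_subset_singleton_of_ncard_le_one
    ⟨v, Set.mem_insert v _⟩ Set.inter_subset_left (Nat.le_of_lt_succ hlt)
  obtain ⟨u, huv, hwu⟩ := G.exists_ne_mem_closedNbhd (hdeg v) hwv
  have hvu : closedNbhd G v ∩ S ⊆ closedNbhd G u ∩ S := fun x hx =>
    ⟨(Set.mem_singleton_iff.1 (hsub hx)) ▸ hwu, hx.2⟩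
  have hsep := (le_min_iff.1 (hdist v u huv.symm)).1
  rw [Set.sdiff_eq_empty.2 hvu, Set.ncard_empty] at hsep
  exact Nat.not_succ_le_zero 0 hsep

theorem stmt_5 {V : Type*} [Fintype V] (G : SimpleGraph V) [DecidableRel G.Adj]
    (S : Set V)
    (hdeg : ∀ v : V, 1 ≤ G.degree v)
    (hdom : ∀ v : V, 1 ≤ (closedNbhd G v ∩ S).ncard)
    (hdist : ∀ u v : V, u ≠ v →
      1 ≤ min ((closedNbhd G u ∩ S) \ (closedNbhd G v ∩ S)).ncard
            ((closedNbhd G v ∩ S) \ (closedNbhd G u ∩ S)).ncard) :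
    ∀ v : V, 2 ≤ (closedNbhd G v ∩ S).ncard :=
  stmt_5_general G S hdeg hdist
end

section
/- In a cubic (3-regular) graph G admitting a self-identifying code, every vertex belongs to at most one triangle. -/
/-- A triangle: a set of three mutually adjacent vertices. -/
def IsTriangle {V : Type*} [DecidableEq V] (G : SimpleGraph V) (t : Finset V) : Prop :=
  t.card = 3 ∧ ∀ u ∈ t, ∀ v ∈ t, u ≠ v → G.Adj u v

lemma tri_mem {V : Type*} [DecidableEq V] (G : SimpleGraph V) {t : Finset V} {v : V}
    (ht : IsTriangle G t) (hv : v ∈ t) :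
    ∃ a b, a ≠ b ∧ G.Adj v a ∧ G.Adj v b ∧ G.Adj a b ∧ t = {v, a, b} := by
  obtain ⟨hc, hadj⟩ := ht
  obtain ⟨x, y, z, hxy, hxz, hyz, rfl⟩ := Finset.card_eq_three.mp hc
  simp only [Finset.mem_insert, Finset.mem_singleton] at hv
  rcases hv with rfl | rfl | rfl
  · exact ⟨y, z, hyz, hadj _ (by simp) _ (by simp) hxy, hadj _ (by simp) _ (by simp) hxz,
      hadj _ (by simp) _ (by simp) hyz, rfl⟩
  · exact ⟨x, z, hxz, hadj _ (by simp) _ (by simp) hxy.symm, hadj _ (by simp) _ (by simp) hyz,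
      hadj _ (by simp) _ (by simp) hxz, by ext w; simp; tauto⟩
  · exact ⟨x, y, hxy, hadj _ (by simp) _ (by simp) hxz.symm, hadj _ (by simp) _ (by simp) hyz.symm,
      hadj _ (by simp) _ (by simp) hxy, by ext w; simp; tauto⟩

lemma nbr_eq {V : Type*} [Fintype V] [DecidableEq V] (G : SimpleGraph V) [DecidableRel G.Adj]
    (hcubic : G.IsRegularOfDegree 3) {v w x y : V}
    (hvw : G.Adj v w) (hvx : G.Adj v x) (hvy : G.Adj v y)
    (hwx : w ≠ x) (hwy : w ≠ y) (hxy : x ≠ y) :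
    G.neighborFinset v = {w, x, y} := by
  have hsub : ({w, x, y} : Finset V) ⊆ G.neighborFinset v := by
    intro z hz
    simp only [Finset.mem_insert, Finset.mem_singleton] at hz
    rcases hz with rfl | rfl | rfl <;> simp [SimpleGraph.mem_neighborFinset, hvw, hvx, hvy]
  have hcard : ({w, x, y} : Finset V).card = 3 := by
    rw [Finset.card_insert_of_notMem (by simp [hwx, hwy]),
      Finset.card_insert_of_notMem (by simp [hxy])]
    simp
  have hdeg : (G.neighborFinset v).card = 3 := hcubic v
  exact (Finset.eq_of_subset_of_card_le hsub (by rw [hdeg, hcard])).symm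

lemma no_two {V : Type*} [Fintype V] [DecidableEq V] (G : SimpleGraph V) [DecidableRel G.Adj]
    (hcubic : G.IsRegularOfDegree 3)
    (hsic : ¬ ∃ u v : V, u ≠ v ∧
      (closedNbhd G u ⊆ closedNbhd G v ∨ closedNbhd G v ⊆ closedNbhd G u))
    {v w x y : V} (hvw : G.Adj v w) (hvx : G.Adj v x) (hvy : G.Adj v y)
    (hwx : G.Adj w x) (hwy : G.Adj w y) (hxy : x ≠ y) : False := by
  have hnv : G.neighborFinset v = {w, x, y} :=
    nbr_eq G hcubic hvw hvx hvy hwx.ne hwy.ne hxy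
  have hnw : G.neighborFinset w = {v, x, y} :=
    nbr_eq G hcubic hvw.symm hwx hwy hvx.ne hvy.ne hxy
  apply hsic
  refine ⟨v, w, hvw.ne, Or.inl ?_⟩
  have mv : ∀ u z, z ∈ closedNbhd G u ↔ z = u ∨ z ∈ G.neighborFinset u := by
    intro u z
    simp [closedNbhd, SimpleGraph.mem_neighborFinset, SimpleGraph.mem_neighborSet]
  intro z hz
  rw [mv, hnv] at hz
  rw [mv, hnw]
  simp only [Finset.mem_insert, Finset.mem_singleton] at hz ⊢
  tauto

theorem stmt_9 {V : Type*} [Fintype V] [DecidableEq V] (G : SimpleGraph V) [DecidableRel G.Adj]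
    (hcubic : G.IsRegularOfDegree 3)
    (hsic : ¬ ∃ u v : V, u ≠ v ∧
      (closedNbhd G u ⊆ closedNbhd G v ∨ closedNbhd G v ⊆ closedNbhd G u)) :
    ∀ (v : V) (t₁ t₂ : Finset V), IsTriangle G t₁ → IsTriangle G t₂ →
      v ∈ t₁ → v ∈ t₂ → t₁ = t₂ := by
  intro v t₁ t₂ ht₁ ht₂ hv₁ hv₂
  obtain ⟨a, b, hab, hva, hvb, hadjab, rfl⟩ := tri_mem G ht₁ hv₁
  obtain ⟨c, d, hcd, hvc, hvd, hadjcd, rfl⟩ := tri_mem G ht₂ hv₂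
  -- all of a b c d belong to neighborFinset v which has card 3
  have hmem : ∀ z, G.Adj v z → z ∈ G.neighborFinset v := fun z h => by
    simp [SimpleGraph.mem_neighborFinset, h]
  by_cases h1 : a = c
  · subst h1
    by_cases h2 : b = d
    · subst h2; rfl
    · exact absurd (no_two G hcubic hsic hva hvb hvd hadjab hadjcd h2) id
  by_cases h3 : a = d
  · subst h3
    by_cases h4 : b = c
    · subst h4; ext w; simp; tauto
    · exact absurd (no_two G hcubic hsic hva hvb hvc hadjab hadjcd.symm h4) id
  by_cases h5 : b = c
  · subst h5
    exact absurd (no_two G hcubic hsic hvb hva hvd hadjab.symm hadjcd h3) id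
  by_cases h6 : b = d
  · subst h6
    exact absurd (no_two G hcubic hsic hvb hva hvc hadjab.symm hadjcd.symm h1) id
  -- otherwise {a,b,c,d} ⊆ neighborFinset v with card 4
  exfalso
  have hsub : ({a, b, c, d} : Finset V) ⊆ G.neighborFinset v := by
    intro z hz
    simp only [Finset.mem_insert, Finset.mem_singleton] at hz
    rcases hz with rfl | rfl | rfl | rfl
    exacts [hmem _ hva, hmem _ hvb, hmem _ hvc, hmem _ hvd]
  have hcard : ({a, b, c, d} : Finset V).card = 4 := by
    rw [Finset.card_insert_of_notMem (by simp [hab, h1, h3]),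
      Finset.card_insert_of_notMem (by simp [h5, h6]),
      Finset.card_insert_of_notMem (by simp [hcd])]
    simp
  have hle := Finset.card_le_card hsub
  have hdeg : (G.neighborFinset v).card = 3 := hcubic v
  rw [hcard, hdeg] at hle
  omega
end

section
/- Let G be a cubic graph admitting a self-identifying code. Then every vertex of G is adjacent to a triangle not containing itself if and only if every vertex of G is contained in a triangle. -/
/-- `v` is adjacent to a triangle not containing itself. -/
def AdjToTriangle {V : Type*} (G : SimpleGraph V) (v : V) : Prop :=
  ∃ a b c : V, G.Adj a b ∧ G.Adj b c ∧ G.Adj a c ∧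
    v ≠ a ∧ v ≠ b ∧ v ≠ c ∧ (G.Adj v a ∨ G.Adj v b ∨ G.Adj v c)

/-- `v` is contained in a triangle. -/
def InTriangle {V : Type*} (G : SimpleGraph V) (v : V) : Prop :=
  ∃ b c : V, G.Adj v b ∧ G.Adj v c ∧ G.Adj b c

/-- In a cubic graph, three distinct neighbors of a vertex are all its neighbors. -/
lemma three {V : Type*} [Fintype V] (G : SimpleGraph V) [DecidableRel G.Adj]
    (hcubic : G.IsRegularOfDegree 3) {a x y z : V}
    (hx : G.Adj a x) (hy : G.Adj a y) (hz : G.Adj a z)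
    (hxy : x ≠ y) (hxz : x ≠ z) (hyz : y ≠ z) :
    ∀ w, G.Adj a w → w = x ∨ w = y ∨ w = z := by
  classical
  intro w hw
  have hcard : ({x, y, z} : Finset V).card = 3 := by
    rw [Finset.card_insert_of_notMem (by simp [hxy, hxz]),
      Finset.card_insert_of_notMem (by simp [hyz]), Finset.card_singleton]
  have hs : ({x, y, z} : Finset V) = G.neighborFinset a := by
    apply Finset.eq_of_subset_of_card_le
    · intro t ht
      simp only [Finset.mem_insert, Finset.mem_singleton] at ht
      rcases ht with rfl | rfl | rfl <;> simpa [SimpleGraph.mem_neighborFinset]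
    · rw [hcard, SimpleGraph.card_neighborFinset_eq_degree, hcubic a]
  have : w ∈ ({x, y, z} : Finset V) := by
    rw [hs]; simpa [SimpleGraph.mem_neighborFinset]
  simpa using this

lemma twin {V : Type*} (G : SimpleGraph V) {b c v d : V}
    (hcb : G.Adj c b) (hcv : G.Adj c v) (hcd : G.Adj c d)
    (hb : ∀ w, G.Adj b w → w = v ∨ w = c ∨ w = d) :
    closedNbhd G b ⊆ closedNbhd G c := by
  intro w hw
  simp only [closedNbhd, Set.mem_insert_iff, SimpleGraph.mem_neighborSet] at hw ⊢
  rcases hw with rfl | hw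
  · exact Or.inr hcb
  · rcases hb w hw with rfl | rfl | rfl
    · exact Or.inr hcv
    · exact Or.inl rfl
    · exact Or.inr hcd

lemma inner_lem {V : Type*} [Fintype V] (G : SimpleGraph V) [DecidableRel G.Adj]
    (hcubic : G.IsRegularOfDegree 3)
    (hsic : ¬ ∃ u v : V, u ≠ v ∧
      (closedNbhd G u ⊆ closedNbhd G v ∨ closedNbhd G v ⊆ closedNbhd G u))
    {v a b c x y z : V}
    (hva : G.Adj v a) (hab : G.Adj a b) (hac : G.Adj a c) (hbc : G.Adj b c)
    (hvb : v ≠ b) (hvc : v ≠ c)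
    (hax : G.Adj a x) (hxy : G.Adj x y) (hxz : G.Adj x z) (hyz : G.Adj y z)
    (hay : a ≠ y) (haz : a ≠ z) : InTriangle G v := by
  have h3a := three G hcubic hva.symm hab hac hvb hvc hbc.ne
  rcases h3a x hax with h | h | h
  · subst h
    exact ⟨y, z, hxy, hxz, hyz⟩
  · -- x = b : triangle x y z, x's neighbors are a, y, z
    subst h
    have h3b := three G hcubic hab.symm hxy hxz hay haz hyz.ne
    rcases h3b c hbc with h | h | h
    · exact absurd h.symm hac.ne
    · -- c = y : x and c are closed twins
      subst h
      exact absurd ⟨x, c, hbc.ne, Or.inl (twin G hbc.symm hac.symm hyz h3b)⟩ hsic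
    · -- c = z
      subst h
      exact absurd ⟨x, c, hbc.ne, Or.inl (twin G hbc.symm hac.symm hyz.symm
        (fun w hw => by have := h3b w hw; tauto))⟩ hsic
  · -- x = c : triangle x y z, x's neighbors are a, y, z
    subst h
    have h3c := three G hcubic hac.symm hxy hxz hay haz hyz.ne
    rcases h3c b hbc.symm with h | h | h
    · exact absurd h.symm hab.ne
    · -- b = y
      subst h
      exact absurd ⟨x, b, hbc.ne', Or.inl (twin G hbc hab.symm hyz h3c)⟩ hsic
    · -- b = z
      subst h
      exact absurd ⟨x, b, hbc.ne', Or.inl (twin G hbc hab.symm hyz.symm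
        (fun w hw => by have := h3c w hw; tauto))⟩ hsic

lemma key_lem {V : Type*} [Fintype V] (G : SimpleGraph V) [DecidableRel G.Adj]
    (hcubic : G.IsRegularOfDegree 3)
    (hsic : ¬ ∃ u v : V, u ≠ v ∧
      (closedNbhd G u ⊆ closedNbhd G v ∨ closedNbhd G v ⊆ closedNbhd G u))
    {v a b c : V}
    (hva : G.Adj v a) (hab : G.Adj a b) (hac : G.Adj a c) (hbc : G.Adj b c)
    (hvb : v ≠ b) (hvc : v ≠ c) (ha : AdjToTriangle G a) : InTriangle G v := by
  obtain ⟨x, y, z, hxy, hyz, hxz, hax, hay, haz, hadj⟩ := ha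
  rcases hadj with h | h | h
  · exact inner_lem G hcubic hsic hva hab hac hbc hvb hvc h hxy hxz hyz hay haz
  · exact inner_lem G hcubic hsic hva hab hac hbc hvb hvc h hxy.symm hyz hxz hax haz
  · exact inner_lem G hcubic hsic hva hab hac hbc hvb hvc h hxz.symm hyz.symm hxy hax hay

lemma bad_lem {V : Type*} [Fintype V] (G : SimpleGraph V) [DecidableRel G.Adj]
    (hcubic : G.IsRegularOfDegree 3)
    (hsic : ¬ ∃ u v : V, u ≠ v ∧
      (closedNbhd G u ⊆ closedNbhd G v ∨ closedNbhd G v ⊆ closedNbhd G u))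
    {v b c d w : V}
    (hvb : G.Adj v b) (hvc : G.Adj v c) (hvd : G.Adj v d) (hbc : G.Adj b c)
    (hbd : b ≠ d) (hcd : c ≠ d) (hvw : G.Adj v w) (hwd : G.Adj w d) : False := by
  have h3v := three G hcubic hvb hvc hvd hbc.ne hbd hcd
  rcases h3v w hvw with h | h | h
  · -- w = b : w and v are closed twins
    subst h
    have h3b := three G hcubic hvb.symm hbc hwd hvc.ne hvd.ne hcd
    exact hsic ⟨w, v, hvb.ne', Or.inl (twin G hvb hvc hvd
      (fun u hu => by have := h3b u hu; tauto))⟩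
  · -- w = c
    subst h
    have h3c := three G hcubic hvc.symm hbc.symm hwd hvb.ne hvd.ne hbd
    exact hsic ⟨w, v, hvc.ne', Or.inl (twin G hvc hvb hvd
      (fun u hu => by have := h3c u hu; tauto))⟩
  · exact G.irrefl (h ▸ hwd)

theorem stmt_10 {V : Type*} [Fintype V] (G : SimpleGraph V) [DecidableRel G.Adj]
    (hcubic : G.IsRegularOfDegree 3)
    (hsic : ¬ ∃ u v : V, u ≠ v ∧
      (closedNbhd G u ⊆ closedNbhd G v ∨ closedNbhd G v ⊆ closedNbhd G u)) :
    (∀ v : V, AdjToTriangle G v) ↔ (∀ v : V, InTriangle G v) := by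
  classical
  constructor
  · intro h v
    obtain ⟨a, b, c, hab, hbc, hac, hva0, hvb0, hvc0, hadj⟩ := h v
    rcases hadj with hv | hv | hv
    · exact key_lem G hcubic hsic hv hab hac hbc hvb0 hvc0 (h a)
    · exact key_lem G hcubic hsic hv hab.symm hbc hac hva0 hvc0 (h b)
    · exact key_lem G hcubic hsic hv hac.symm hbc.symm hab hva0 hvb0 (h c)
  · intro h v
    obtain ⟨b, c, hvb, hvc, hbc⟩ := h v
    obtain ⟨d, hvd, hdb, hdc⟩ : ∃ d, G.Adj v d ∧ d ≠ b ∧ d ≠ c := by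
      by_contra hcon
      push_neg at hcon
      have hsub : G.neighborFinset v ⊆ {b, c} := by
        intro t ht
        rw [SimpleGraph.mem_neighborFinset] at ht
        by_cases htb : t = b
        · simp [htb]
        · simp [hcon t ht htb]
      have := Finset.card_le_card hsub
      rw [SimpleGraph.card_neighborFinset_eq_degree, hcubic v] at this
      have h2 : ({b, c} : Finset V).card ≤ 2 := Finset.card_insert_le _ _ |>.trans (by simp)
      omega
    obtain ⟨x, y, hdx, hdy, hxy⟩ := h d
    have hvx : v ≠ x := by
      rintro rfl
      exact bad_lem G hcubic hsic hvb hvc hvd hbc hdb.symm hdc.symm hxy hdy.symm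
    have hvy : v ≠ y := by
      rintro rfl
      exact bad_lem G hcubic hsic hvb hvc hvd hbc hdb.symm hdc.symm hxy.symm hdx.symm
    exact ⟨d, x, y, hdx, hxy, hdy, hvd.ne, hvx, hvy, Or.inl hvd⟩
end

section
/- Let G be a cubic graph on n ≥ 8 vertices admitting a self-identifying code, and suppose x ∈ V(G) is not adjacent to any triangle not containing x. Then there exists a vertex y within distance 2 of x such that y is not adjacent to any triangle not containing y, and y is not an open-twin or closed-twin of any other vertex. -/
/-- `v` is a twin (open or closed) of some other vertex. -/
def IsTwin {V : Type*} (G : SimpleGraph V) (v : V) : Prop :=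
  ∃ w : V, w ≠ v ∧
    (closedNbhd G w = closedNbhd G v ∨ G.neighborSet w = G.neighborSet v)

lemma nbr_char {V : Type*} [Fintype V] [DecidableEq V] (G : SimpleGraph V) [DecidableRel G.Adj]
    (hc : G.IsRegularOfDegree 3) {v u1 u2 u3 : V}
    (h1 : G.Adj v u1) (h2 : G.Adj v u2) (h3 : G.Adj v u3)
    (d12 : u1 ≠ u2) (d13 : u1 ≠ u3) (d23 : u2 ≠ u3) :
    ∀ z, G.Adj v z ↔ z = u1 ∨ z = u2 ∨ z = u3 := by
  have hsub : ({u1, u2, u3} : Finset V) ⊆ G.neighborFinset v := by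
    intro z hz
    simp only [Finset.mem_insert, Finset.mem_singleton] at hz
    rw [SimpleGraph.mem_neighborFinset]
    rcases hz with rfl | rfl | rfl <;> assumption
  have hcard : (G.neighborFinset v).card = 3 := hc v
  have heq : G.neighborFinset v = {u1, u2, u3} := by
    refine (Finset.eq_of_subset_of_card_le hsub ?_).symm
    rw [hcard]
    exact le_of_eq (Finset.card_eq_three.mpr ⟨u1, u2, u3, d12, d13, d23, rfl⟩).symm
  intro z
  rw [← SimpleGraph.mem_neighborFinset, heq]
  simp

lemma third_nbr {V : Type*} [Fintype V] [DecidableEq V] (G : SimpleGraph V) [DecidableRel G.Adj]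
    (hc : G.IsRegularOfDegree 3) {v : V} (u1 u2 : V) :
    ∃ u3, G.Adj v u3 ∧ u3 ≠ u1 ∧ u3 ≠ u2 := by
  have hcard : (G.neighborFinset v).card = 3 := hc v
  have hne : (G.neighborFinset v \ {u1, u2}).Nonempty := by
    rw [← Finset.card_pos]
    have h2' : ({u1, u2} : Finset V).card ≤ 2 := (Finset.card_insert_le _ _).trans (by simp)
    have := Finset.le_card_sdiff ({u1, u2} : Finset V) (G.neighborFinset v)
    omega
  obtain ⟨u3, hu3⟩ := hne
  simp only [Finset.mem_sdiff, SimpleGraph.mem_neighborFinset, Finset.mem_insert,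
    Finset.mem_singleton, not_or] at hu3
  exact ⟨u3, hu3.1, hu3.2.1, hu3.2.2⟩

lemma helper {V : Type*} [Fintype V] [DecidableEq V] (G : SimpleGraph V) [DecidableRel G.Adj]
    (hcubic : G.IsRegularOfDegree 3)
    (hsic : ¬ ∃ u v : V, u ≠ v ∧
      (closedNbhd G u ⊆ closedNbhd G v ∨ closedNbhd G v ⊆ closedNbhd G u))
    (x w a b c a' b' c' : V)
    (hNx : ∀ z, G.Adj x z ↔ z = a ∨ z = b ∨ z = c)
    (hNw : ∀ z, G.Adj w z ↔ z = a ∨ z = b ∨ z = c)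
    (hNa : ∀ z, G.Adj a z ↔ z = x ∨ z = w ∨ z = a')
    (hNb : ∀ z, G.Adj b z ↔ z = x ∨ z = w ∨ z = b')
    (hNc : ∀ z, G.Adj c z ↔ z = x ∨ z = w ∨ z = c')
    (hab : ¬ G.Adj a b) (hac : ¬ G.Adj a c) (hbc : ¬ G.Adj b c)
    (hxw : ¬ G.Adj x w)
    (hc'x : c' ≠ x) (hc'w : c' ≠ w)
    (hca : c' ≠ a') (hcb : c' ≠ b') :
    ∃ y : V, G.dist x y ≤ 2 ∧ ¬ AdjToTriangle G y ∧ ¬ IsTwin G y := by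
  have hxc : G.Adj x c := (hNx c).mpr (by tauto)
  have hwc : G.Adj w c := (hNw c).mpr (by tauto)
  have hcc' : G.Adj c c' := (hNc c').mpr (by tauto)
  have hc'c : c' ≠ c := fun h => G.irrefl (h ▸ hcc')
  have hc'a : c' ≠ a := fun h => hac ((h ▸ hcc').symm)
  have hc'b : c' ≠ b := fun h => hbc ((h ▸ hcc').symm)
  have hxc' : ¬ G.Adj x c' := fun h => by
    rcases (hNx c').mp h with h' | h' | h' <;> [exact hc'a h'; exact hc'b h'; exact hc'c h']
  have hwc' : ¬ G.Adj w c' := fun h => by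
    rcases (hNw c').mp h with h' | h' | h' <;> [exact hc'a h'; exact hc'b h'; exact hc'c h']
  -- c is not a twin
  have hctwin : ¬ IsTwin G c := by
    rintro ⟨v, hv, hcl | hop⟩
    · exact hsic ⟨v, c, hv, Or.inl hcl.subset⟩
    · have hvx : G.Adj v x := by
        have : x ∈ G.neighborSet c := hxc.symm
        rw [← hop] at this; exact this
      have hvc' : G.Adj v c' := by
        have : c' ∈ G.neighborSet c := hcc'
        rw [← hop] at this; exact this
      rcases (hNx v).mp hvx.symm with rfl | rfl | rfl
      · rcases (hNa c').mp hvc' with h | h | h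
        exacts [hc'x h, hc'w h, hca h]
      · rcases (hNb c').mp hvc' with h | h | h
        exacts [hc'x h, hc'w h, hcb h]
      · exact hv rfl
  by_cases htri : ∃ p q, G.Adj c' p ∧ G.Adj c' q ∧ G.Adj p q
  · -- c' is in a triangle; y = c'
    obtain ⟨p, q, hp, hq, hpq⟩ := htri
    have hkey : ∀ z, G.Adj c' z → z ≠ x ∧ z ≠ w ∧ z ≠ c' := by
      intro z hz
      refine ⟨?_, ?_, fun h => G.irrefl (h ▸ hz)⟩
      · rintro rfl; exact hxc' hz.symm
      · rintro rfl; exact hwc' hz.symm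
    have hpc : p ≠ c := by
      rintro rfl
      rcases (hNc q).mp hpq with rfl | rfl | rfl
      · exact hxc' hq.symm
      · exact hwc' hq.symm
      · exact G.irrefl hq
    have hqc : q ≠ c := by
      rintro rfl
      rcases (hNc p).mp hpq.symm with rfl | rfl | rfl
      · exact hxc' hp.symm
      · exact hwc' hp.symm
      · exact G.irrefl hp
    have hNc' : ∀ z, G.Adj c' z ↔ z = c ∨ z = p ∨ z = q :=
      nbr_char G hcubic hcc'.symm hp hq (Ne.symm hpc) (Ne.symm hqc) hpq.ne
    obtain ⟨p'', hp'', hp''c', hp''q⟩ := third_nbr G hcubic (v := p) c' q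
    obtain ⟨q'', hq'', hq''c', hq''p⟩ := third_nbr G hcubic (v := q) c' p
    have hNp : ∀ z, G.Adj p z ↔ z = c' ∨ z = q ∨ z = p'' :=
      nbr_char G hcubic hp.symm hpq hp'' hq.ne (Ne.symm hp''c') (Ne.symm hp''q)
    have hNq : ∀ z, G.Adj q z ↔ z = c' ∨ z = p ∨ z = q'' :=
      nbr_char G hcubic hq.symm hpq.symm hq'' hp.ne (Ne.symm hq''c') (Ne.symm hq''p)
    have hpqne : p ≠ q := hpq.ne
    have hp''q'' : p'' ≠ q'' := by
      rintro rfl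
      refine hsic ⟨p, q, hpqne, Or.inl ?_⟩
      intro z hz
      rw [closedNbhd, Set.mem_insert_iff, SimpleGraph.mem_neighborSet] at hz ⊢
      rcases hz with rfl | hz
      · exact Or.inr ((hNq z).mpr (Or.inr (Or.inl rfl)))
      · rcases (hNp z).mp hz with rfl | rfl | rfl
        · exact Or.inr ((hNq z).mpr (Or.inl rfl))
        · exact Or.inl rfl
        · exact Or.inr ((hNq z).mpr (Or.inr (Or.inr rfl)))
    have hqp'' : ¬ G.Adj q p'' := by
      intro h
      rcases (hNq p'').mp h with h' | h' | h'
      exacts [hp''c' h', hp''.ne' h', hp''q'' h']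
    have hpq'' : ¬ G.Adj p q'' := by
      intro h
      rcases (hNp q'').mp h with h' | h' | h'
      exacts [hq''c' h', hq''.ne' h', hp''q'' h'.symm]
    refine ⟨c', ?_, ?_, ?_⟩
    · calc G.dist x c' ≤ (SimpleGraph.Walk.cons hxc (SimpleGraph.Walk.cons hcc'
          SimpleGraph.Walk.nil)).length := SimpleGraph.dist_le _
        _ = 2 := by simp
    · -- no triangle adjacent to c' avoiding c'
      rintro ⟨t1, t2, t3, h12, h23, h13, hn1, hn2, hn3, hadj⟩
      have claim : ∀ s u v : V, G.Adj c' s → u ≠ c' → v ≠ c' →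
          G.Adj s u → G.Adj s v → ¬ G.Adj u v := by
        intro s u v hs hu hv hsu hsv huv
        rcases (hNc' s).mp hs with rfl | rfl | rfl
        · rcases (hNc u).mp hsu with rfl | rfl | rfl
          · rcases (hNc v).mp hsv with rfl | rfl | rfl
            exacts [G.irrefl huv, hxw huv, hv rfl]
          · rcases (hNc v).mp hsv with rfl | rfl | rfl
            exacts [hxw huv.symm, G.irrefl huv, hv rfl]
          · exact hu rfl
        · rcases (hNp u).mp hsu with rfl | rfl | rfl
          · exact hu rfl
          · rcases (hNp v).mp hsv with rfl | rfl | rfl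
            exacts [hv rfl, G.irrefl huv, hqp'' huv]
          · rcases (hNp v).mp hsv with rfl | rfl | rfl
            exacts [hv rfl, hqp'' huv.symm, G.irrefl huv]
        · rcases (hNq u).mp hsu with rfl | rfl | rfl
          · exact hu rfl
          · rcases (hNq v).mp hsv with rfl | rfl | rfl
            exacts [hv rfl, G.irrefl huv, hpq'' huv]
          · rcases (hNq v).mp hsv with rfl | rfl | rfl
            exacts [hv rfl, hpq'' huv.symm, G.irrefl huv]
      rcases hadj with h | h | h
      · exact claim t1 t2 t3 h (Ne.symm hn2) (Ne.symm hn3) h12 h13 h23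
      · exact claim t2 t1 t3 h (Ne.symm hn1) (Ne.symm hn3) h12.symm h23 h13
      · exact claim t3 t1 t2 h (Ne.symm hn1) (Ne.symm hn2) h13.symm h23.symm h12
    · -- c' not a twin
      rintro ⟨v, hv, hcl | hop⟩
      · exact hsic ⟨v, c', hv, Or.inl hcl.subset⟩
      · have hvc : G.Adj v c := by
          have : c ∈ G.neighborSet c' := hcc'.symm
          rw [← hop] at this; exact this
        have hvp : G.Adj v p := by
          have : p ∈ G.neighborSet c' := hp
          rw [← hop] at this; exact this
        rcases (hNc v).mp hvc.symm with rfl | rfl | rfl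
        · rcases (hNx p).mp hvp with rfl | rfl | rfl
          · rcases (hNa c').mp hp.symm with h | h | h
            exacts [hc'x h, hc'w h, hca h]
          · rcases (hNb c').mp hp.symm with h | h | h
            exacts [hc'x h, hc'w h, hcb h]
          · exact hpc rfl
        · rcases (hNw p).mp hvp with rfl | rfl | rfl
          · rcases (hNa c').mp hp.symm with h | h | h
            exacts [hc'x h, hc'w h, hca h]
          · rcases (hNb c').mp hp.symm with h | h | h
            exacts [hc'x h, hc'w h, hcb h]
          · exact hpc rfl
        · exact hv rfl
  · -- c' in no triangle; y = c
    have key : ∀ s, G.Adj c s → ¬ ∃ u v, G.Adj s u ∧ G.Adj s v ∧ G.Adj u v := by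
      intro s hs ⟨u, v, hsu, hsv, huv⟩
      rcases (hNc s).mp hs with rfl | rfl | rfl
      · rcases (hNx u).mp hsu with rfl | rfl | rfl <;>
          rcases (hNx v).mp hsv with rfl | rfl | rfl <;>
          first
            | exact G.irrefl huv
            | exact hab huv | exact hab huv.symm
            | exact hac huv | exact hac huv.symm
            | exact hbc huv | exact hbc huv.symm
      · rcases (hNw u).mp hsu with rfl | rfl | rfl <;>
          rcases (hNw v).mp hsv with rfl | rfl | rfl <;>
          first
            | exact G.irrefl huv
            | exact hab huv | exact hab huv.symm
            | exact hac huv | exact hac huv.symm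
            | exact hbc huv | exact hbc huv.symm
      · exact htri ⟨u, v, hsu, hsv, huv⟩
    refine ⟨c, ?_, ?_, hctwin⟩
    · exact le_trans (SimpleGraph.dist_le (SimpleGraph.Walk.cons hxc SimpleGraph.Walk.nil))
        (by simp)
    · rintro ⟨t1, t2, t3, h12, h23, h13, hn1, hn2, hn3, hadj⟩
      rcases hadj with h | h | h
      · exact key t1 h ⟨t2, t3, h12, h13, h23⟩
      · exact key t2 h ⟨t1, t3, h12.symm, h23, h13⟩
      · exact key t3 h ⟨t1, t2, h13.symm, h23.symm, h12⟩

theorem stmt_12 {V : Type*} [Fintype V] (G : SimpleGraph V) [DecidableRel G.Adj]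
    (hconn : G.Connected) (hcubic : G.IsRegularOfDegree 3)
    (hn : 8 ≤ Fintype.card V)
    (hsic : ¬ ∃ u v : V, u ≠ v ∧
      (closedNbhd G u ⊆ closedNbhd G v ∨ closedNbhd G v ⊆ closedNbhd G u))
    (x : V) (hx : ¬ AdjToTriangle G x) :
    ∃ y : V, G.dist x y ≤ 2 ∧ ¬ AdjToTriangle G y ∧ ¬ IsTwin G y := by
  classical
  by_cases ht : IsTwin G x
  case neg => exact ⟨x, by simp [SimpleGraph.dist_self], hx, ht⟩
  obtain ⟨w, hwx, hcl | hop⟩ := ht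
  · exact absurd ⟨w, x, hwx, Or.inl hcl.subset⟩ hsic
  -- x has an open twin w
  obtain ⟨a, b, c, hab0, hac0, hbc0, heq⟩ := Finset.card_eq_three.mp (hcubic x)
  have hNx : ∀ z, G.Adj x z ↔ z = a ∨ z = b ∨ z = c := by
    intro z
    rw [← SimpleGraph.mem_neighborFinset, heq]
    simp
  have hNw : ∀ z, G.Adj w z ↔ z = a ∨ z = b ∨ z = c := by
    intro z
    rw [← hNx z, show (G.Adj w z ↔ G.Adj x z) from by
      rw [← SimpleGraph.mem_neighborSet, ← SimpleGraph.mem_neighborSet, hop]]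
  have hxa : G.Adj x a := (hNx a).mpr (Or.inl rfl)
  have hxb : G.Adj x b := (hNx b).mpr (Or.inr (Or.inl rfl))
  have hxc : G.Adj x c := (hNx c).mpr (Or.inr (Or.inr rfl))
  have hwa : G.Adj w a := (hNw a).mpr (Or.inl rfl)
  have hwb : G.Adj w b := (hNw b).mpr (Or.inr (Or.inl rfl))
  have hwc : G.Adj w c := (hNw c).mpr (Or.inr (Or.inr rfl))
  -- a, b, c pairwise non-adjacent, else x is adjacent to a triangle
  have hab : ¬ G.Adj a b := fun h =>
    hx ⟨a, b, w, h, hwb.symm, hwa.symm, hxa.ne, hxb.ne, Ne.symm hwx, Or.inl hxa⟩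
  have hac : ¬ G.Adj a c := fun h =>
    hx ⟨a, c, w, h, hwc.symm, hwa.symm, hxa.ne, hxc.ne, Ne.symm hwx, Or.inl hxa⟩
  have hbc : ¬ G.Adj b c := fun h =>
    hx ⟨b, c, w, h, hwc.symm, hwb.symm, hxb.ne, hxc.ne, Ne.symm hwx, Or.inl hxb⟩
  have hxw : ¬ G.Adj x w := by
    intro h
    rcases (hNx w).mp h with rfl | rfl | rfl
    · exact hab ((hNw b).mpr (Or.inr (Or.inl rfl)))
    · exact hbc ((hNw c).mpr (Or.inr (Or.inr rfl)))
    · exact hac (((hNw a).mpr (Or.inl rfl)).symm)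
  -- third neighbors
  obtain ⟨a', haa', ha'x, ha'w⟩ := third_nbr G hcubic (v := a) x w
  obtain ⟨b', hbb', hb'x, hb'w⟩ := third_nbr G hcubic (v := b) x w
  obtain ⟨c', hcc', hc'x, hc'w⟩ := third_nbr G hcubic (v := c) x w
  have hxwne : x ≠ w := fun h => hwx h.symm
  have hNa : ∀ z, G.Adj a z ↔ z = x ∨ z = w ∨ z = a' :=
    nbr_char G hcubic hxa.symm hwa.symm haa' hxwne (Ne.symm ha'x) (Ne.symm ha'w)
  have hNb : ∀ z, G.Adj b z ↔ z = x ∨ z = w ∨ z = b' :=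
    nbr_char G hcubic hxb.symm hwb.symm hbb' hxwne (Ne.symm hb'x) (Ne.symm hb'w)
  have hNc : ∀ z, G.Adj c z ↔ z = x ∨ z = w ∨ z = c' :=
    nbr_char G hcubic hxc.symm hwc.symm hcc' hxwne (Ne.symm hc'x) (Ne.symm hc'w)
  by_cases h1 : a' = b'
  · by_cases h2 : c' = a'
    · -- all three equal: cardinality contradiction
      subst h2
      rcases h1 with rfl
      -- now a' = b' = c' =: a' (named c')
      exfalso
      have hNz : ∀ z, G.Adj c' z ↔ z = a ∨ z = b ∨ z = c :=
        nbr_char G hcubic haa'.symm hbb'.symm hcc'.symm hab0 hac0 hbc0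
      set S : Finset V := {x, w, a, b, c, c'} with hS
      have hclosed : ∀ u ∈ S, ∀ v, G.Adj u v → v ∈ S := by
        intro u hu v huv
        simp only [hS, Finset.mem_insert, Finset.mem_singleton] at hu ⊢
        rcases hu with rfl | rfl | rfl | rfl | rfl | rfl
        · rcases (hNx v).mp huv with rfl | rfl | rfl <;> tauto
        · rcases (hNw v).mp huv with rfl | rfl | rfl <;> tauto
        · rcases (hNa v).mp huv with rfl | rfl | rfl <;> tauto
        · rcases (hNb v).mp huv with rfl | rfl | rfl <;> tauto
        · rcases (hNc v).mp huv with rfl | rfl | rfl <;> tauto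
        · rcases (hNz v).mp huv with rfl | rfl | rfl <;> tauto
      have hwalk : ∀ {u v : V}, G.Walk u v → u ∈ S → v ∈ S := by
        intro u v p
        induction p with
        | nil => exact id
        | cons h _ ih => exact fun hu => ih (hclosed _ hu _ h)
      have hall : ∀ v, v ∈ S := by
        intro v
        obtain ⟨p⟩ := hconn.preconnected x v
        exact hwalk p (by simp [hS])
      have hcard : Fintype.card V ≤ S.card := by
        rw [← Finset.card_univ]
        exact Finset.card_le_card fun v _ => hall v
      have hS6 : S.card ≤ 6 := by
        rw [hS]
        have g1 := Finset.card_insert_le x ({w, a, b, c, c'} : Finset V)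
        have g2 := Finset.card_insert_le w ({a, b, c, c'} : Finset V)
        have g3 := Finset.card_insert_le a ({b, c, c'} : Finset V)
        have g4 := Finset.card_insert_le b ({c, c'} : Finset V)
        have g5 := Finset.card_insert_le c ({c'} : Finset V)
        have g6 : ({c'} : Finset V).card = 1 := Finset.card_singleton _
        omega
      omega
    · -- c' ≠ a' = b' : c is the special vertex
      exact helper G hcubic hsic x w a b c a' b' c' hNx hNw hNa hNb hNc
        hab hac hbc hxw hc'x hc'w h2 (by rw [← h1]; exact h2)
  · have hNx1 : ∀ z, G.Adj x z ↔ z = a ∨ z = c ∨ z = b := fun z => (hNx z).trans (or_congr_right or_comm)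
    have hNw1 : ∀ z, G.Adj w z ↔ z = a ∨ z = c ∨ z = b := fun z => (hNw z).trans (or_congr_right or_comm)
    have hNx2 : ∀ z, G.Adj x z ↔ z = b ∨ z = c ∨ z = a := fun z => (hNx z).trans or_rotate
    have hNw2 : ∀ z, G.Adj w z ↔ z = b ∨ z = c ∨ z = a := fun z => (hNw z).trans or_rotate
    have hcb' : ¬ G.Adj c b := fun h => hbc h.symm
    have hba' : ¬ G.Adj b a := fun h => hab h.symm
    have hca' : ¬ G.Adj c a := fun h => hac h.symm
    by_cases h2 : c' = a'
    · -- b special: b' ∉ {a', c'}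
      have e1 : b' ≠ a' := fun h => h1 h.symm
      have e2 : b' ≠ c' := fun h => h1 (h2 ▸ h).symm
      exact helper G hcubic hsic x w a c b a' c' b' hNx1 hNw1
        hNa hNc hNb hac hab hcb' hxw hb'x hb'w e1 e2
    · by_cases h3 : c' = b'
      · -- a special: a' ∉ {b', c'}
        have e2 : a' ≠ c' := fun h => h1 (h3 ▸ h)
        exact helper G hcubic hsic x w b c a b' c' a' hNx2 hNw2
          hNb hNc hNa hbc hba' hca' hxw ha'x ha'w h1 e2
      · -- c special
        exact helper G hcubic hsic x w a b c a' b' c' hNx hNw hNa hNb hNc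
          hab hac hbc hxw hc'x hc'w h2 h3
end
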